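/- arXiv:2509.02531 — 2 statements merged into one kernel-verified Lean document; each statement's English description precedes it below -/
import Mathlib

section
/- Every finite abelian subgroup of PGL(2, ℂ) is either cyclic or isomorphic to the Klein four group (ℤ/2)². -/
open Matrix

/-- `PGL(2, ℂ)`: the quotient of `GL(2, ℂ)` by its center. -/
def PGL2C : Type :=
  GL (Fin 2) ℂ ⧸ Subgroup.center (GL (Fin 2) ℂ)

noncomputable instance : Group PGL2C :=
  inferInstanceAs (Group (GL (Fin 2) ℂ ⧸ Subgroup.center (GL (Fin 2) ℂ)))

/-!
Lifts `A, B ∈ GL₂(ℂ)` of commuting elements of `PGL₂(ℂ)` satisfy `AB = c • BA` with `c² = 1`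
(take determinants), so they either commute or anticommute.

If all lifts of elements of `G` commute, they have a common eigenvector `v`. Writing `μ(A)` for
the eigenvalue of `A` on `v`, the character `A ↦ μ(A)² / det A`, the ratio of the two eigenvalues
of `A`, has exactly the scalars as kernel: a matrix with a double eigenvalue that has finite order
modulo scalars is scalar. Hence `G` embeds into `ℂˣ` and is cyclic.

Otherwise two lifts `A, B` anticommute. A matrix anticommuting with an invertible one has trace
zero, so its square is scalar, and a matrix commuting with both `A` and `B` is scalar. Dividing a
lift `C` by the element of `{1, A, B, AB}` that has the same commutation signs with `A` and `B`
shows that `G = {1, a, b, ab}` is a Klein four group.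
-/

theorem isCyclic_of_ker_eq {H G R : Type*} [Group H] [Group G] [Finite G] [CommRing R]
    [IsDomain R] (f : H →* G) (hf : Function.Surjective f) (χ : H →* Rˣ)
    (hker : χ.ker = f.ker) : IsCyclic G := by
  let e : G ≃* H ⧸ χ.ker :=
    (QuotientGroup.quotientKerEquivOfSurjective f hf).symm.trans
      (QuotientGroup.quotientMulEquivOfEq hker.symm)
  exact isCyclic_of_injective_ringHom ((Units.coeHom R).comp ((QuotientGroup.kerLift χ).comp e))
    (Units.val_injective.comp ((QuotientGroup.kerLift_injective χ).comp e.injective))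

theorem isKleinFour_of_forall_eq {G : Type*} [Group G] {a b : G} (ha : a ≠ 1) (hb : b ≠ 1)
    (hab : a * b ≠ 1) (hsq : ∀ g : G, g * g = 1)
    (hall : ∀ g : G, g = 1 ∨ g = a ∨ g = b ∨ g = a * b) : IsKleinFour G where
  card_four := by
    classical
    have huniv : (Set.univ : Set G) = {1, a, b, a * b} := by
      ext g
      simpa using hall g
    have hba : a ≠ b := by
      rintro rfl
      exact hab (hsq a)
    rw [← Set.ncard_univ, huniv, Set.ncard_insert_of_notMem, Set.ncard_insert_of_notMem,
      Set.ncard_pair]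
    · simpa using ha
    · simpa [hba] using hb
    · simp [ha.symm, hb.symm, hab.symm]
  exponent_two := by
    have hdvd : Monoid.exponent G ∣ 2 :=
      Monoid.exponent_dvd_of_forall_pow_eq_one fun g => by rw [sq, hsq]
    rcases (Nat.dvd_prime Nat.prime_two).mp hdvd with h | h
    · exact absurd (Monoid.exp_eq_one_iff.mp h |>.elim a 1) ha
    · exact h

theorem commute_mul_inv_of_mul_eq_neg_mul {M : Type*} [Group M] [HasDistribNeg M] {X Y Z : M}
    (hX : X * Z = -(Z * X)) (hY : Y * Z = -(Z * Y)) : Commute (X * Y⁻¹) Z := by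
  have hY' : Y⁻¹ * Z = -(Z * Y⁻¹) :=
    calc Y⁻¹ * Z = Y⁻¹ * (Z * Y) * Y⁻¹ := by simp [mul_assoc]
      _ = Y⁻¹ * -(Y * Z) * Y⁻¹ := by rw [hY, neg_neg]
      _ = -(Z * Y⁻¹) := by simp
  calc X * Y⁻¹ * Z = -(X * Z) * Y⁻¹ := by rw [mul_assoc, hY', mul_neg, neg_mul, mul_assoc]
    _ = Z * (X * Y⁻¹) := by rw [hX, neg_neg, mul_assoc]

theorem smul_one_add_pow_of_mul_self_eq_zero {K A : Type*} [CommSemiring K] [Semiring A]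
    [Algebra K A] {N : A} (hN : N * N = 0) (c : K) (n : ℕ) :
    (c • 1 + N) ^ (n + 1) = c ^ (n + 1) • 1 + ((n + 1) * c ^ n) • N := by
  induction n with
  | zero => simp
  | succ k ih =>
    rw [pow_succ, ih]
    simp only [add_mul, mul_add, smul_mul_assoc, mul_smul_comm, one_mul, mul_one, hN, smul_zero,
      add_zero]
    push_cast
    match_scalars <;> ring

theorem eq_zero_of_smul_one_add_pow_eq_smul_one {K A : Type*} [Field K] [CharZero K] [Ring A]
    [Algebra K A] [Nontrivial A] {N : A} (hN : N * N = 0) {μ c : K} (hμ : μ ≠ 0) {n : ℕ}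
    (hn : n ≠ 0) (hpow : (μ • 1 + N) ^ n = c • 1) : N = 0 := by
  obtain ⟨m, rfl⟩ := Nat.exists_eq_succ_of_ne_zero hn
  rw [smul_one_add_pow_of_mul_self_eq_zero hN] at hpow
  have ht : ((m : K) + 1) * μ ^ m ≠ 0 :=
    mul_ne_zero (Nat.cast_add_one_ne_zero m) (pow_ne_zero m hμ)
  set s := (((m : K) + 1) * μ ^ m)⁻¹ * (c - μ ^ (m + 1))
  have hNs : N = s • 1 := by
    rw [mul_smul, sub_smul, ← hpow, add_sub_cancel_left, smul_smul, inv_mul_cancel₀ ht, one_smul]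
  rw [hNs, smul_mul_smul_comm, one_mul, smul_eq_zero] at hN
  simp_all

namespace Matrix

variable {n K : Type*} [Fintype n] [DecidableEq n] [Field K]

theorem mul_self_fin_two {R : Type*} [CommRing R] [Nontrivial R] (A : Matrix (Fin 2) (Fin 2) R) :
    A * A = A.trace • A - A.det • 1 := by
  have h := A.aeval_self_charpoly
  rw [charpoly_fin_two] at h
  simp only [map_add, map_sub, map_mul, Polynomial.aeval_X_pow, Polynomial.aeval_X,
    Polynomial.aeval_C, Algebra.algebraMap_eq_smul_one, smul_mul_assoc, one_mul] at h
  rw [← sq, ← sub_eq_zero, ← h]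
  abel

theorem trace_eq_zero_of_mul_eq_neg_mul [CharZero K] {X : Matrix n n K} {Y : GL n K}
    (h : X * Y = -(Y * X)) : X.trace = 0 := by
  have hX : X = X * Y * (Y⁻¹ : GL n K) := by
    rw [mul_assoc, ← Units.val_mul, mul_inv_cancel, Units.val_one, mul_one]
  have : X.trace = -X.trace := by
    conv_lhs => rw [hX, h, neg_mul, trace_neg, trace_mul_cycle, ← Units.val_mul, inv_mul_cancel,
      Units.val_one, one_mul]
  exact CharZero.eq_neg_self_iff.mp this

theorem exists_mulVec_eq_smul [IsAlgClosed K] [Nonempty n] (A : Matrix n n K) :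
    ∃ (δ : K) (v : n → K), v ≠ 0 ∧ A *ᵥ v = δ • v := by
  obtain ⟨δ, hδ⟩ := Module.End.exists_eigenvalue (toLin' A)
  obtain ⟨v, hv⟩ := hδ.exists_hasEigenvector
  exact ⟨δ, v, hv.2, by simpa using hv.apply_eq_smul⟩

theorem eq_smul_one_of_mulVec_eq_smul {A : Matrix n n K} {c : K} {s : Set (n → K)}
    (hs : Submodule.span K s = ⊤) (h : ∀ v ∈ s, A *ᵥ v = c • v) : A = c • 1 :=
  toLin'.injective <| LinearMap.ext_on hs fun v hv => by simpa using h v hv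

theorem exists_eq_smul_of_mulVec_eq_smul {A : Matrix (Fin 2) (Fin 2) K} {δ : K}
    {v w : Fin 2 → K} (hA : A ≠ δ • 1) (hv : v ≠ 0) (hAv : A *ᵥ v = δ • v)
    (hAw : A *ᵥ w = δ • w) : ∃ c : K, w = c • v := by
  by_contra! hw
  have hli : LinearIndependent K ![w, v] :=
    linearIndependent_fin2.mpr ⟨hv, fun c hc => hw c hc.symm⟩
  refine hA (eq_smul_one_of_mulVec_eq_smul (hli.span_eq_top_of_card_eq_finrank (by simp)) ?_)
  rintro _ ⟨i, rfl⟩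
  fin_cases i
  exacts [hAw, hAv]

theorem exists_common_eigenvector [IsAlgClosed K] {S : Set (Matrix (Fin 2) (Fin 2) K)}
    (hS : ∀ A ∈ S, ∀ B ∈ S, Commute A B) :
    ∃ v : Fin 2 → K, v ≠ 0 ∧ ∀ A ∈ S, ∃ μ : K, A *ᵥ v = μ • v := by
  by_cases hscalar : ∀ A ∈ S, ∃ c : K, A = c • 1
  · refine ⟨Pi.single 0 1, by simp, fun A hA => ?_⟩
    obtain ⟨c, rfl⟩ := hscalar A hA
    exact ⟨c, by rw [smul_mulVec, one_mulVec]⟩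
  push Not at hscalar
  obtain ⟨A₀, hA₀, hA₀ns⟩ := hscalar
  obtain ⟨δ, v, hv, hA₀v⟩ := A₀.exists_mulVec_eq_smul
  refine ⟨v, hv, fun A hA => exists_eq_smul_of_mulVec_eq_smul (hA₀ns δ) hv hA₀v ?_⟩
  rw [mulVec_mulVec, hS A₀ hA₀ A hA, ← mulVec_mulVec, hA₀v, mulVec_smul]

theorem sub_smul_one_mul_self_eq_zero {C : Matrix (Fin 2) (Fin 2) K} {μ : K} {v : Fin 2 → K}
    (hμ : μ ≠ 0) (hv : v ≠ 0) (hCv : C *ᵥ v = μ • v) (hdet : C.det = μ ^ 2) :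
    (C - μ • 1) * (C - μ • 1) = 0 := by
  have hroot : (C - μ • 1).det = 0 :=
    exists_mulVec_eq_zero_iff.mp ⟨v, hv, by rw [sub_mulVec, hCv, smul_mulVec, one_mulVec, sub_self]⟩
  have hdet' : (C - μ • 1).det = C.det - μ * C.trace + μ ^ 2 := by
    simp [det_fin_two, trace_fin_two]
    ring
  have htr : (C - μ • 1).trace = 0 := by
    have : μ * (2 * μ - C.trace) = 0 := by linear_combination hroot - hdet' - hdet
    rw [trace_sub, trace_smul, trace_one, Fintype.card_fin, smul_eq_mul, Nat.cast_ofNat]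
    linear_combination -(mul_eq_zero.mp this).resolve_left hμ
  rw [mul_self_fin_two, hroot, htr, zero_smul, zero_smul, sub_zero]

theorem eq_smul_one_of_pow_eq_smul_one [CharZero K] {C : Matrix (Fin 2) (Fin 2) K} {μ c : K}
    {v : Fin 2 → K} (hμ : μ ≠ 0) (hv : v ≠ 0) (hCv : C *ᵥ v = μ • v) (hdet : C.det = μ ^ 2)
    {n : ℕ} (hn : n ≠ 0) (hpow : C ^ n = c • 1) : C = μ • 1 := by
  have hN := eq_zero_of_smul_one_add_pow_eq_smul_one
    (sub_smul_one_mul_self_eq_zero hμ hv hCv hdet) hμ hn (by rwa [add_sub_cancel])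
  rwa [sub_eq_zero] at hN

namespace GeneralLinearGroup

theorem mulVec_ne_zero (A : GL n K) {v : n → K} (hv : v ≠ 0) : (A : Matrix n n K) *ᵥ v ≠ 0 :=
  fun h => hv (mulVec_injective_of_isUnit A.isUnit (h.trans (mulVec_zero _).symm))

theorem val_mul_eq_neg_of_mul_eq_neg {A B : GL n K} (hAB : A * B = -(B * A)) :
    (A : Matrix n n K) * B = -((B : Matrix n n K) * A) := by
  simpa using congrArg Units.val hAB

theorem exists_eigenvalue_hom (H : Subgroup (GL n K)) {v : n → K} (hv : v ≠ 0)
    (h : ∀ A ∈ H, ∃ μ : K, (A : Matrix n n K) *ᵥ v = μ • v) :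
    ∃ χ : H →* Kˣ, ∀ A : H, ((A : GL n K) : Matrix n n K) *ᵥ v = (χ A : K) • v := by
  have hunit : ∀ A : H, ∃ μ : Kˣ, ((A : GL n K) : Matrix n n K) *ᵥ v = (μ : K) • v := by
    intro A
    obtain ⟨μ, hμ⟩ := h A A.2
    refine ⟨Units.mk0 μ ?_, hμ⟩
    rintro rfl
    exact mulVec_ne_zero (A : GL n K) hv (by rw [hμ, zero_smul])
  choose χ hχ using hunit
  have huniq : Function.Injective fun μ : K => μ • v := smul_left_injective K hv
  refine ⟨{ toFun := χ
            map_one' := Units.ext (huniq ?_)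
            map_mul' := fun A B => Units.ext (huniq ?_) }, hχ⟩
  · simp [← hχ]
  · show (χ (A * B) : K) • v = ((χ A * χ B : Kˣ) : K) • v
    rw [← hχ, Subgroup.coe_mul, Units.val_mul, ← mulVec_mulVec, hχ, mulVec_smul, hχ, smul_smul,
      Units.val_mul, mul_comm]

end GeneralLinearGroup

end Matrix

namespace PGL2C

noncomputable def mk : GL (Fin 2) ℂ →* PGL2C :=
  QuotientGroup.mk' _

theorem mk_surjective : Function.Surjective mk :=
  QuotientGroup.mk'_surjective _

theorem mk_eq_one_iff {A : GL (Fin 2) ℂ} :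
    mk A = 1 ↔ ∃ c : ℂ, (A : Matrix (Fin 2) (Fin 2) ℂ) = c • 1 := by
  rw [show mk A = 1 ↔ A ∈ Subgroup.center _ from QuotientGroup.eq_one_iff A,
    GeneralLinearGroup.mem_center_iff_val_mem_range_scalar]
  simp [eq_comm, smul_one_eq_diagonal]

theorem commute_or_mul_eq_neg_of_commute {A B : GL (Fin 2) ℂ} (h : Commute (mk A) (mk B)) :
    Commute A B ∨ A * B = -(B * A) := by
  obtain ⟨c, hc⟩ : ∃ c : ℂ, (↑(A * B * (B * A)⁻¹) : Matrix (Fin 2) (Fin 2) ℂ) = c • 1 := by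
    rw [← mk_eq_one_iff, map_mul, map_inv, map_mul, map_mul, h.eq, mul_inv_cancel]
  have hAB : (↑(A * B) : Matrix (Fin 2) (Fin 2) ℂ) = c • ↑(B * A) := by
    rw [← one_mul (↑(B * A) : Matrix (Fin 2) (Fin 2) ℂ), ← smul_mul_assoc, ← hc, ← Units.val_mul,
      inv_mul_cancel_right]
  have hc2 : c * c = 1 := by
    have hdet := congrArg det hAB
    rw [det_smul, Units.val_mul, Units.val_mul, det_mul, det_mul, mul_comm (det _),
      Fintype.card_fin, sq] at hdet
    exact (mul_eq_right₀ (mul_ne_zero (isUnits_det_units B).ne_zero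
      (isUnits_det_units A).ne_zero)).mp hdet.symm
  rcases mul_self_eq_one_iff.mp hc2 with rfl | rfl
  · exact Or.inl (Units.ext (by simpa using hAB))
  · exact Or.inr (Units.ext (by simpa using hAB))

theorem isCyclic_of_forall_commute (G : Subgroup PGL2C) [Finite G]
    (hG : ∀ A B : GL (Fin 2) ℂ, mk A ∈ G → mk B ∈ G → Commute A B) : IsCyclic G := by
  obtain ⟨v, hv, hvG⟩ :=
    exists_common_eigenvector (S := Units.val '' (G.comap mk : Set (GL (Fin 2) ℂ)))
      (by rintro _ ⟨A, hA, rfl⟩ _ ⟨B, hB, rfl⟩; exact (hG A B hA hB).units_val)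
  obtain ⟨ev, hev⟩ := GeneralLinearGroup.exists_eigenvalue_hom (G.comap mk) hv
    (fun A hA => hvG _ ⟨A, hA, rfl⟩)
  let χ := ev ^ 2 / GeneralLinearGroup.det.comp (G.comap mk).subtype
  refine isCyclic_of_ker_eq _ (mk.subgroupComap_surjective_of_surjective G mk_surjective) χ ?_
  ext A
  rw [MonoidHom.mem_ker, MonoidHom.mem_ker,
    show mk.subgroupComap G A = 1 ↔ mk A = 1 from Subtype.ext_iff, mk_eq_one_iff]
  simp only [χ, MonoidHom.div_apply, MonoidHom.pow_apply, div_eq_one, MonoidHom.comp_apply,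
    Units.ext_iff, Units.val_pow_eq_pow_val, GeneralLinearGroup.val_det_apply, Subgroup.coe_subtype]
  constructor
  · intro hdet
    have hpow : mk (A : GL (Fin 2) ℂ) ^ Nat.card G = 1 :=
      congrArg Subtype.val (pow_card_eq_one' (G := G) (x := ⟨mk A, A.2⟩))
    obtain ⟨c, hc⟩ := mk_eq_one_iff.mp (by rwa [map_pow])
    rw [Units.val_pow_eq_pow_val] at hc
    exact ⟨ev A, eq_smul_one_of_pow_eq_smul_one (ev A).ne_zero hv (hev A) hdet.symm
      Nat.card_pos.ne' hc⟩
  · rintro ⟨c, hc⟩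
    have hμ : (ev A : ℂ) = c :=
      smul_left_injective ℂ hv (by simp only [← hev, hc, smul_mulVec, one_mulVec])
    rw [hμ, hc, det_smul, det_one, Fintype.card_fin, mul_one]

variable {A B : GL (Fin 2) ℂ}

theorem mk_mul_self_eq_one_of_mul_eq_neg (hAB : A * B = -(B * A)) : mk A * mk A = 1 := by
  rw [← map_mul, mk_eq_one_iff]
  refine ⟨-(A : Matrix (Fin 2) (Fin 2) ℂ).det, ?_⟩
  rw [Units.val_mul, mul_self_fin_two, trace_eq_zero_of_mul_eq_neg_mul
    (GeneralLinearGroup.val_mul_eq_neg_of_mul_eq_neg hAB), zero_smul, zero_sub, neg_smul]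

theorem mk_ne_one_of_mul_eq_neg (hAB : A * B = -(B * A)) : mk A ≠ 1 := by
  intro h
  obtain ⟨c, hc⟩ := mk_eq_one_iff.mp h
  have htr := trace_eq_zero_of_mul_eq_neg_mul (GeneralLinearGroup.val_mul_eq_neg_of_mul_eq_neg hAB)
  rw [hc, trace_smul, trace_one, Fintype.card_fin, smul_eq_mul, mul_eq_zero] at htr
  rcases htr with rfl | h2
  · exact A.ne_zero (by rw [hc, zero_smul])
  · norm_num at h2

theorem mk_eq_one_of_commute_of_mul_eq_neg {C : GL (Fin 2) ℂ} (hAB : A * B = -(B * A))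
    (hCA : Commute C A) (hCB : Commute C B) : mk C = 1 := by
  by_contra hC
  obtain ⟨δ, v, hv, hAv⟩ := (A : Matrix (Fin 2) (Fin 2) ℂ).exists_mulVec_eq_smul
  have hδ : δ ≠ 0 := by
    rintro rfl
    exact GeneralLinearGroup.mulVec_ne_zero A hv (by rw [hAv, zero_smul])
  obtain ⟨α, hCv⟩ := exists_eq_smul_of_mulVec_eq_smul
    (fun h => mk_ne_one_of_mul_eq_neg hAB (mk_eq_one_iff.mpr ⟨δ, h⟩)) hv hAv
    (w := (C : Matrix (Fin 2) (Fin 2) ℂ) *ᵥ v)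
    (by rw [mulVec_mulVec, ← hCA.units_val.eq, ← mulVec_mulVec, hAv, mulVec_smul])
  set w := (B : Matrix (Fin 2) (Fin 2) ℂ) *ᵥ v
  obtain ⟨c, hc⟩ := exists_eq_smul_of_mulVec_eq_smul
    (fun h => hC (mk_eq_one_iff.mpr ⟨α, h⟩)) hv hCv (w := w)
    (by rw [mulVec_mulVec, hCB.units_val.eq, ← mulVec_mulVec, hCv, mulVec_smul])
  -- `B` maps the `δ`-eigenline of `A` to its `-δ`-eigenline, yet `w = B v` lies on the former
  have hAw : (A : Matrix (Fin 2) (Fin 2) ℂ) *ᵥ w = -δ • w := by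
    rw [mulVec_mulVec, GeneralLinearGroup.val_mul_eq_neg_of_mul_eq_neg hAB, neg_mulVec,
      ← mulVec_mulVec, hAv, mulVec_smul, neg_smul]
  have hAw' : (A : Matrix (Fin 2) (Fin 2) ℂ) *ᵥ w = δ • w := by
    rw [hc, mulVec_smul, hAv, smul_comm]
  have : (2 * δ) • w = 0 := by
    rw [two_mul, add_smul]
    nth_rw 1 [← hAw']
    rw [hAw, neg_smul, neg_add_cancel]
  rcases smul_eq_zero.mp this with h | h
  · exact hδ (by simpa using h)
  · exact GeneralLinearGroup.mulVec_ne_zero B hv h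

theorem mk_eq_one_or_of_mul_eq_neg {G : Subgroup PGL2C} (hG : ∀ x ∈ G, ∀ y ∈ G, Commute x y)
    (hA : mk A ∈ G) (hB : mk B ∈ G) (hAB : A * B = -(B * A)) {C : GL (Fin 2) ℂ}
    (hC : mk C ∈ G) : mk C = 1 ∨ mk C = mk A ∨ mk C = mk B ∨ mk C = mk A * mk B := by
  have hBA : B * A = -(A * B) := by rw [hAB, neg_neg]
  have hABA : A * B * A = -(A * (A * B)) := by rw [mul_assoc, hBA, mul_neg]
  have hABB : A * B * B = -(B * (A * B)) := by rw [← mul_assoc B, hBA, neg_mul, neg_neg]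
  have hquot : ∀ Y, Commute (C * Y⁻¹) A → Commute (C * Y⁻¹) B → mk C = mk Y :=
    fun Y h1 h2 => by simpa [mul_inv_eq_one] using mk_eq_one_of_commute_of_mul_eq_neg hAB h1 h2
  rcases commute_or_mul_eq_neg_of_commute (hG _ hC _ hA) with hCA | hCA <;>
    rcases commute_or_mul_eq_neg_of_commute (hG _ hC _ hB) with hCB | hCB
  · exact Or.inl (mk_eq_one_of_commute_of_mul_eq_neg hAB hCA hCB)
  · exact Or.inr <| Or.inl <| hquot A (hCA.mul_left (Commute.refl A).inv_left)
      (commute_mul_inv_of_mul_eq_neg_mul hCB hAB)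
  · exact Or.inr <| Or.inr <| Or.inl <| hquot B (commute_mul_inv_of_mul_eq_neg_mul hCA hBA)
      (hCB.mul_left (Commute.refl B).inv_left)
  · refine Or.inr <| Or.inr <| Or.inr ?_
    rw [← map_mul]
    exact hquot (A * B) (commute_mul_inv_of_mul_eq_neg_mul hCA hABA)
      (commute_mul_inv_of_mul_eq_neg_mul hCB hABB)

theorem isKleinFour_of_mul_eq_neg {G : Subgroup PGL2C} (hG : ∀ x ∈ G, ∀ y ∈ G, Commute x y)
    (hA : mk A ∈ G) (hB : mk B ∈ G) (hAB : A * B = -(B * A)) : IsKleinFour G := by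
  have hBA : B * A = -(A * B) := by rw [hAB, neg_neg]
  have hABA : A * B * A = -(A * (A * B)) := by rw [mul_assoc, hBA, mul_neg]
  have hall : ∀ g : G,
      g = 1 ∨ g = ⟨mk A, hA⟩ ∨ g = ⟨mk B, hB⟩ ∨ g = ⟨mk A, hA⟩ * ⟨mk B, hB⟩ := by
    intro g
    obtain ⟨C, hC⟩ := mk_surjective (g : PGL2C)
    simp only [Subtype.ext_iff, Subgroup.coe_one, Subgroup.coe_mul, ← hC]
    exact mk_eq_one_or_of_mul_eq_neg hG hA hB hAB (hC ▸ g.2)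
  refine isKleinFour_of_forall_eq (fun h => mk_ne_one_of_mul_eq_neg hAB (congrArg Subtype.val h))
    (fun h => mk_ne_one_of_mul_eq_neg hBA (congrArg Subtype.val h))
    (fun h => mk_ne_one_of_mul_eq_neg hABA (by simpa [Subtype.ext_iff] using h)) ?_ hall
  intro g
  rcases hall g with rfl | rfl | rfl | rfl <;> apply Subtype.ext
  · simp
  · exact mk_mul_self_eq_one_of_mul_eq_neg hAB
  · exact mk_mul_self_eq_one_of_mul_eq_neg hBA
  · simpa using mk_mul_self_eq_one_of_mul_eq_neg hABA

end PGL2C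

/-- Every finite abelian subgroup of `PGL(2, ℂ)` is either cyclic or
isomorphic to the Klein four group `(ℤ/2)²`. -/
theorem stmt4 (G : Subgroup PGL2C) [Finite G]
    (habel : ∀ a b : G, a * b = b * a) :
    IsCyclic G ∨ Nonempty (G ≃* Multiplicative (ZMod 2 × ZMod 2)) := by
  have hG : ∀ x ∈ G, ∀ y ∈ G, Commute x y := fun x hx y hy =>
    congrArg Subtype.val (habel ⟨x, hx⟩ ⟨y, hy⟩)
  by_cases hanti : ∃ A B : GL (Fin 2) ℂ, PGL2C.mk A ∈ G ∧ PGL2C.mk B ∈ G ∧ A * B = -(B * A)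
  · obtain ⟨A, B, hA, hB, hAB⟩ := hanti
    have := PGL2C.isKleinFour_of_mul_eq_neg hG hA hB hAB
    exact Or.inr IsKleinFour.nonempty_mulEquiv
  · push Not at hanti
    exact Or.inl <| PGL2C.isCyclic_of_forall_commute G fun A B hA hB =>
      (PGL2C.commute_or_mul_eq_neg_of_commute (hG _ hA _ hB)).resolve_right (hanti A B hA hB)
end

section
/- Let G be a finite abelian group containing a subgroup C with C ≅ ℤ/4 and G/C ≅ (ℤ/4)³. Then G ≅ (ℤ/4)⁴ or G ≅ ℤ/16 × (ℤ/4)² or G ≅ ℤ/8 × (ℤ/4)² × ℤ/2. -/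
open Subgroup Function

private lemma card_comap_eq' {G H : Type*} [Group G] [Group H] [Finite G]
    (f : G →* H) (K : Subgroup H) :
    Nat.card (K.comap f) = Nat.card (K ⊓ f.range : Subgroup H) * Nat.card f.ker := by
  set L := K.comap f with hL
  have hmem : ∀ x : L, f (x : G) ∈ K ⊓ f.range := fun x =>
    Subgroup.mem_inf.mpr ⟨x.2, ⟨(x : G), rfl⟩⟩
  let f' : L →* (K ⊓ f.range : Subgroup H) :=
    MonoidHom.codRestrict (f.comp L.subtype) _ hmem
  have hs : Surjective f' := by
    rintro ⟨h, hh⟩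
    rcases Subgroup.mem_inf.mp hh with ⟨hK, g, rfl⟩
    exact ⟨⟨g, hK⟩, Subtype.ext rfl⟩
  have e1 : (L ⧸ f'.ker) ≃* (K ⊓ f.range : Subgroup H) :=
    QuotientGroup.quotientKerEquivOfSurjective f' hs
  have e2 : f'.ker ≃ f.ker := by
    refine ⟨fun x => ⟨(x : L), ?_⟩, fun y => ⟨⟨(y : G), ?_⟩, ?_⟩, fun x => rfl, fun y => rfl⟩
    · have := x.2
      rw [MonoidHom.mem_ker] at this ⊢
      exact congrArg Subtype.val this
    · have := y.2
      rw [MonoidHom.mem_ker] at this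
      rw [hL, Subgroup.mem_comap, this]; exact K.one_mem
    · have := y.2
      rw [MonoidHom.mem_ker] at this ⊢
      exact Subtype.ext this
  calc Nat.card L = Nat.card (L ⧸ f'.ker) * Nat.card f'.ker :=
        Subgroup.card_eq_card_quotient_mul_card_subgroup f'.ker
    _ = Nat.card (K ⊓ f.range : Subgroup H) * Nat.card f.ker := by
        rw [Nat.card_congr e1.toEquiv, Nat.card_congr e2]

private lemma cnt_range' (N k : ℕ) [NeZero N] :
    Nat.card {x : Multiplicative (ZMod N) // ∃ y, y ^ k = x} = N / N.gcd k := by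
  have key : ∀ v : ZMod N, (∃ w : ZMod N, k • w = v) ↔
      v ∈ AddSubgroup.zmultiples ((k : ℕ) : ZMod N) := by
    intro v
    constructor
    · rintro ⟨w, rfl⟩
      refine AddSubgroup.mem_zmultiples_iff.mpr ⟨(w.val : ℤ), ?_⟩
      rw [zsmul_eq_mul, Int.cast_natCast, ZMod.natCast_val, ZMod.cast_id, nsmul_eq_mul, mul_comm]
    · rintro ⟨m, rfl⟩
      refine ⟨(m : ZMod N), ?_⟩
      show k • (m : ZMod N) = m • ((k : ℕ) : ZMod N)
      rw [nsmul_eq_mul, zsmul_eq_mul, mul_comm]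
  have e : {x : Multiplicative (ZMod N) // ∃ y, y ^ k = x} ≃
      AddSubgroup.zmultiples ((k : ℕ) : ZMod N) := by
    refine (Equiv.subtypeEquiv Multiplicative.toAdd ?_).trans (Equiv.refl _)
    intro x
    rw [← key]
    constructor
    · rintro ⟨y, rfl⟩; exact ⟨y.toAdd, (toAdd_pow y k).symm⟩
    · rintro ⟨w, hw⟩; exact ⟨Multiplicative.ofAdd w, by rw [← ofAdd_nsmul, hw]; rfl⟩
  rw [Nat.card_congr e, Nat.card_zmultiples, ZMod.addOrderOf_coe k (NeZero.ne N)]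

private lemma cnt_ker' (N k : ℕ) [NeZero N] :
    Nat.card {x : Multiplicative (ZMod N) // x ^ k = 1} = N.gcd k := by
  let f : Multiplicative (ZMod N) →* Multiplicative (ZMod N) := powMonoidHom k
  have h1 : Nat.card (Multiplicative (ZMod N)) = Nat.card (f.range) * Nat.card (f.ker) := by
    rw [Subgroup.card_eq_card_quotient_mul_card_subgroup f.ker,
      Nat.card_congr (QuotientGroup.quotientKerEquivRange f).toEquiv]
  have h2 : Nat.card (Multiplicative (ZMod N)) = N := by
    rw [Nat.card_congr Multiplicative.toAdd, Nat.card_zmod]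
  have h3 : Nat.card (f.range) = N / N.gcd k := by
    rw [← cnt_range' N k]
    exact Nat.card_congr (Equiv.subtypeEquivRight fun x => by
      simp [f, MonoidHom.mem_range, powMonoidHom_apply])
  have h4 : Nat.card (f.ker) = Nat.card {x : Multiplicative (ZMod N) // x ^ k = 1} :=
    Nat.card_congr (Equiv.subtypeEquivRight fun x => by
      simp [f, MonoidHom.mem_ker, powMonoidHom_apply])
  have hgd : N.gcd k ∣ N := Nat.gcd_dvd_left N k
  have hN : N ≠ 0 := NeZero.ne N
  rw [← h4]
  have key := h1.symm.trans h2
  rw [h3] at key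
  have hq : 0 < N / N.gcd k :=
    Nat.div_pos (Nat.le_of_dvd (Nat.pos_of_ne_zero hN) hgd)
      (Nat.pos_of_ne_zero (fun h => hN (Nat.eq_zero_of_gcd_eq_zero_left h)))
  have h5 : N / N.gcd k * Nat.card f.ker = N / N.gcd k * N.gcd k := by
    rw [key, Nat.div_mul_cancel hgd]
  exact Nat.eq_of_mul_eq_mul_left hq h5

private def MulEquiv.piCongrLeft'' {ι ι' : Type*} (M : ι → Type*) [∀ i, Mul (M i)] (e : ι ≃ ι') :
    (∀ i, M i) ≃* (∀ j, M (e.symm j)) :=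
  { Equiv.piCongrLeft' M e with map_mul' := fun _ _ => rfl }

private def MulEquiv.piFin3' (M : Fin 3 → Type*) [∀ i, Mul (M i)] :
    (∀ i, M i) ≃* M 0 × M 1 × M 2 where
  toFun f := (f 0, f 1, f 2)
  invFun t := Fin.cons t.1 (Fin.cons t.2.1 (Fin.cons t.2.2 (fun i => i.elim0)))
  left_inv f := by funext i; fin_cases i <;> rfl
  right_inv t := rfl
  map_mul' f g := rfl

private def MulEquiv.piFin4' (M : Fin 4 → Type*) [∀ i, Mul (M i)] :
    (∀ i, M i) ≃* M 0 × M 1 × M 2 × M 3 where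
  toFun f := (f 0, f 1, f 2, f 3)
  invFun t := Fin.cons t.1 (Fin.cons t.2.1 (Fin.cons t.2.2.1 (Fin.cons t.2.2.2 (fun i => i.elim0))))
  left_inv f := by funext i; fin_cases i <;> rfl
  right_inv t := rfl
  map_mul' f g := rfl

private def zmodMulCongr {m n : ℕ} (h : m = n) :
    Multiplicative (ZMod m) ≃* Multiplicative (ZMod n) :=
  AddEquiv.toMultiplicative (ZMod.ringEquivCongr h).toAddEquiv

private def prod3Untag (a b c : ℕ) :
    (Multiplicative (ZMod a) × Multiplicative (ZMod b) × Multiplicative (ZMod c)) ≃*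
      Multiplicative (ZMod a × ZMod b × ZMod c) :=
  (MulEquiv.prodCongr (MulEquiv.refl _) (MulEquiv.prodMultiplicative _ _).symm).trans
    (MulEquiv.prodMultiplicative _ _).symm

private def prod4Untag (a b c d : ℕ) :
    (Multiplicative (ZMod a) × Multiplicative (ZMod b) × Multiplicative (ZMod c) ×
        Multiplicative (ZMod d)) ≃*
      Multiplicative (ZMod a × ZMod b × ZMod c × ZMod d) :=
  (MulEquiv.prodCongr (MulEquiv.refl _) (prod3Untag b c d)).trans
    (MulEquiv.prodMultiplicative _ _).symm

set_option maxHeartbeats 1000000 in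
/-- Let `G` be a finite abelian group containing a subgroup `C`
with `C ≅ ℤ/4` and `G/C ≅ (ℤ/4)³`.  Then `G ≅ (ℤ/4)⁴`, or `G ≅ ℤ/16 × (ℤ/4)²`, or
`G ≅ ℤ/8 × (ℤ/4)² × ℤ/2`. -/
theorem stmt12 {G : Type*} [CommGroup G] [Finite G] (C : Subgroup G)
    (hC : Nonempty (C ≃* Multiplicative (ZMod 4)))
    (hQ : Nonempty ((G ⧸ C) ≃* Multiplicative (ZMod 4 × ZMod 4 × ZMod 4))) :
    Nonempty (G ≃* Multiplicative (ZMod 4 × ZMod 4 × ZMod 4 × ZMod 4)) ∨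
      Nonempty (G ≃* Multiplicative (ZMod 16 × ZMod 4 × ZMod 4)) ∨
      Nonempty (G ≃* Multiplicative (ZMod 8 × ZMod 4 × ZMod 4 × ZMod 2)) := by
  classical
  obtain ⟨κ⟩ := hC
  obtain ⟨ψ⟩ := hQ
  -- basic cardinalities
  have hcC : Nat.card C = 4 := by
    rw [Nat.card_congr κ.toEquiv, Nat.card_congr Multiplicative.toAdd, Nat.card_zmod]
  have hcQ : Nat.card (G ⧸ C) = 64 := by
    rw [Nat.card_congr ψ.toEquiv, Nat.card_congr Multiplicative.toAdd]
    simp [Nat.card_prod, Nat.card_zmod]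
  have hcG : Nat.card G = 256 := by
    rw [Subgroup.card_eq_card_quotient_mul_card_subgroup C, hcC, hcQ]
  set sq : G →* G := powMonoidHom 2 with hsqdef
  set pw4 : G →* G := powMonoidHom 4 with hpw4def
  -- every fourth power lies in C
  have h4C : ∀ g : G, g ^ 4 ∈ C := by
    intro g
    have hq4 : ∀ y : Multiplicative (ZMod 4 × ZMod 4 × ZMod 4), y ^ 4 = 1 := by decide
    have h1 : ((g : G ⧸ C)) ^ 4 = 1 := ψ.injective (by rw [map_pow, hq4, map_one])
    rwa [← QuotientGroup.mk_pow, QuotientGroup.eq_one_iff] at h1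
  have hr4C : pw4.range ≤ C := by
    rintro x ⟨g, rfl⟩; exact h4C g
  have hbdvd : Nat.card pw4.range ∣ 4 := hcC ▸ Subgroup.card_dvd_of_le hr4C
  -- the key counting identity : |C ∩ G²| * |G[2]| = 32
  have hT : Nat.card (C ⊓ sq.range : Subgroup G) * Nat.card sq.ker = 32 := by
    have e1 : C.comap sq =
        ((powMonoidHom 2 : (G ⧸ C) →* (G ⧸ C)).ker).comap (QuotientGroup.mk' C) := by
      ext g
      simp only [Subgroup.mem_comap, MonoidHom.mem_ker, powMonoidHom_apply,
        QuotientGroup.mk'_apply, hsqdef]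
      rw [← QuotientGroup.mk_pow, QuotientGroup.eq_one_iff]
    have c1 := card_comap_eq' sq C
    have c2 := card_comap_eq' (QuotientGroup.mk' C)
      ((powMonoidHom 2 : (G ⧸ C) →* (G ⧸ C)).ker)
    rw [MonoidHom.range_eq_top_of_surjective _ (QuotientGroup.mk'_surjective C), inf_top_eq,
      QuotientGroup.ker_mk'] at c2
    have hW : Nat.card ((powMonoidHom 2 : (G ⧸ C) →* (G ⧸ C)).ker) = 8 := by
      have eW1 : ((powMonoidHom 2 : (G ⧸ C) →* (G ⧸ C)).ker) ≃ {q : G ⧸ C // q ^ 2 = 1} :=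
        Equiv.subtypeEquivRight fun q => by
          simp [MonoidHom.mem_ker, powMonoidHom_apply]
      have eW2 : {q : G ⧸ C // q ^ 2 = 1} ≃
          {y : Multiplicative (ZMod 4 × ZMod 4 × ZMod 4) // y ^ 2 = 1} :=
        Equiv.subtypeEquiv ψ.toEquiv fun q => by
          show q ^ 2 = 1 ↔ ψ q ^ 2 = 1
          exact ⟨fun h => by rw [← map_pow, h, map_one],
            fun h => ψ.injective (by rw [map_pow, h, map_one ψ])⟩
      rw [Nat.card_congr (eW1.trans eW2), Nat.card_eq_fintype_card]
      decide
    rw [e1, c2, hW, hcC] at c1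
    linarith [c1]
  -- C ∩ G² contains an element of order 2
  have hec2 : 2 ∣ Nat.card (C ⊓ sq.range : Subgroup G) := by
    set x : C := κ.symm (Multiplicative.ofAdd 1) with hxdef
    set z : G := (x : G) ^ 2 with hzdef
    have hzmem : z ∈ C ⊓ sq.range :=
      Subgroup.mem_inf.mpr ⟨C.pow_mem x.2 2, ⟨(x : G), rfl⟩⟩
    have hzne : z ≠ 1 := by
      intro h
      have hx2 : x ^ 2 = 1 := by
        apply Subtype.ext
        rw [SubmonoidClass.coe_pow, OneMemClass.coe_one]
        exact h
      have hk := congrArg κ hx2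
      rw [map_pow, hxdef, MulEquiv.apply_symm_apply, map_one κ] at hk
      exact absurd hk (by decide)
    have hz2 : z ^ 2 = 1 := by
      have hx4 : x ^ 4 = 1 := κ.injective (by
        rw [map_pow, hxdef, MulEquiv.apply_symm_apply, map_one κ]; decide)
      have hx4' : ((x : G)) ^ 4 = 1 := by
        rw [← SubmonoidClass.coe_pow, hx4, OneMemClass.coe_one]
      have hzz : z ^ 2 = (x : G) ^ 4 := by rw [hzdef, ← pow_mul]
      rw [hzz, hx4']
    have hord : orderOf z = 2 := orderOf_eq_prime hz2 hzne
    have hle : Subgroup.zpowers z ≤ C ⊓ sq.range := Subgroup.zpowers_le.mpr hzmem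
    calc (2 : ℕ) = Nat.card (Subgroup.zpowers z) := by rw [Nat.card_zpowers, hord]
      _ ∣ Nat.card (C ⊓ sq.range : Subgroup G) := Subgroup.card_dvd_of_le hle
  have hec4 : Nat.card (C ⊓ sq.range : Subgroup G) ∣ 4 :=
    hcC ▸ Subgroup.card_dvd_of_le inf_le_left
  -- if the fourth powers have order 4, then C ⊆ G²
  have hb4 : Nat.card pw4.range = 4 → Nat.card (C ⊓ sq.range : Subgroup G) = 4 := by
    intro hb
    have hCle : C ≤ pw4.range := by
      have htop : (pw4.range).subgroupOf C = ⊤ := by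
        apply Subgroup.eq_top_of_card_eq
        rw [Nat.card_congr (Subgroup.subgroupOfEquivOfLe hr4C).toEquiv, hb, hcC]
      exact Subgroup.subgroupOf_eq_top.mp htop
    have hCsq : C ≤ sq.range := by
      intro c hc
      obtain ⟨g, rfl⟩ := hCle hc
      exact ⟨g ^ 2, by
        show (g ^ 2) ^ 2 = pw4 g
        rw [hpw4def, powMonoidHom_apply, ← pow_mul]⟩
    rw [inf_eq_left.mpr hCsq, hcC]
  -- at most 2 elements which are fourth powers and have square 1
  have hd2 : Nat.card {g : G // g ^ 2 = 1 ∧ ∃ y : G, y ^ 4 = g} ≤ 2 := by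
    have hcard2 : Nat.card {y : Multiplicative (ZMod 4) // y ^ 2 = 1} = 2 := by
      rw [Nat.card_eq_fintype_card]; decide
    refine le_trans ?_ (le_of_eq hcard2)
    have hmemC : ∀ t : {g : G // g ^ 2 = 1 ∧ ∃ y : G, y ^ 4 = g}, t.1 ∈ C := fun t =>
      hr4C ⟨t.2.2.choose, t.2.2.choose_spec⟩
    have hprop : ∀ t, (κ ⟨t.1, hmemC t⟩) ^ 2 = 1 := fun t => by
      rw [← map_pow]
      have h2 : (⟨t.1, hmemC t⟩ : C) ^ 2 = 1 := by
        apply Subtype.ext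
        rw [SubmonoidClass.coe_pow, OneMemClass.coe_one]
        exact t.2.1
      rw [h2, map_one κ]
    apply Nat.card_le_card_of_injective (fun t => ⟨κ ⟨t.1, hmemC t⟩, hprop t⟩)
    intro s t hst
    have h1 : κ ⟨s.1, hmemC s⟩ = κ ⟨t.1, hmemC t⟩ := congrArg Subtype.val hst
    have h2 : (⟨(s : G), hmemC s⟩ : C) = ⟨(t : G), hmemC t⟩ := κ.injective h1
    have h3 := congrArg (Subtype.val (p := (· ∈ C))) h2
    exact Subtype.ext h3
  -- structure theorem
  obtain ⟨ι, hι, n, hn1, ⟨φ⟩⟩ := CommGroup.equiv_prod_multiplicative_zmod_of_finite G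
  haveI := hι
  have hprod : ∏ i, n i = 256 := by
    have : Nat.card G = ∏ i, n i := by
      rw [Nat.card_congr φ.toEquiv, Nat.card_pi]
      exact Finset.prod_congr rfl fun i _ => by
        rw [Nat.card_congr Multiplicative.toAdd, Nat.card_zmod]
    rw [← this, hcG]
  have hdvd : ∀ i, n i ∣ 2 ^ 8 := fun i => by
    have := Finset.dvd_prod_of_mem n (Finset.mem_univ i)
    rw [hprod] at this
    exact_mod_cast this
  have hee : ∀ i, ∃ k, k ≤ 8 ∧ n i = 2 ^ k := by
    intro i
    obtain ⟨k, hk, hkk⟩ := (Nat.dvd_prime_pow Nat.prime_two).mp (hdvd i)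
    exact ⟨k, hk, hkk⟩
  choose e he8 hne using hee
  haveI : ∀ i, NeZero (n i) := fun i => ⟨by rw [hne i]; positivity⟩
  have he1 : ∀ i, 1 ≤ e i := by
    intro i
    rcases Nat.eq_zero_or_pos (e i) with h | h
    · exfalso
      have hni := hn1 i
      rw [hne i, h, pow_zero] at hni
      omega
    · exact h
  have hsum : ∑ i, e i = 8 := by
    have h2 : (2 : ℕ) ^ (∑ i, e i) = 2 ^ 8 := by
      rw [← Finset.prod_pow_eq_pow_sum]
      rw [← Finset.prod_congr rfl fun i _ => (hne i)]
      rw [hprod]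
      norm_num
    exact Nat.pow_right_injective (le_refl 2) h2
  -- transport the counts
  set r := Fintype.card ι with hrdef
  have hAcard : Nat.card sq.ker = 2 ^ r := by
    have e1 : sq.ker ≃ {g : G // g ^ 2 = 1} :=
      Equiv.subtypeEquivRight fun g => by
        simp [hsqdef, MonoidHom.mem_ker, powMonoidHom_apply]
    have e2 : {g : G // g ^ 2 = 1} ≃
        {h : ∀ i, Multiplicative (ZMod (n i)) // h ^ 2 = 1} :=
      Equiv.subtypeEquiv φ.toEquiv fun g => by
        show g ^ 2 = 1 ↔ φ g ^ 2 = 1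
        exact ⟨fun h => by rw [← map_pow, h, map_one],
         fun h => φ.injective (by rw [map_pow, h, map_one φ])⟩
    have e3 : {h : ∀ i, Multiplicative (ZMod (n i)) // h ^ 2 = 1} ≃
        ∀ i, {x : Multiplicative (ZMod (n i)) // x ^ 2 = 1} :=
      (Equiv.subtypeEquivRight fun h => by
        simp [funext_iff]).trans Equiv.subtypePiEquivPi
    rw [Nat.card_congr ((e1.trans e2).trans e3), Nat.card_pi]
    have : ∀ i ∈ Finset.univ, Nat.card {x : Multiplicative (ZMod (n i)) // x ^ 2 = 1} = 2 := by
      intro i _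
      rw [cnt_ker' (n i) 2, hne i]
      exact Nat.gcd_eq_right (dvd_pow_self 2 (Nat.one_le_iff_ne_zero.mp (he1 i)))
    rw [Finset.prod_congr rfl this, Finset.prod_const, Finset.card_univ]
  have hBcard : Nat.card pw4.range = ∏ i, (n i / Nat.gcd (n i) 4) := by
    have e1 : pw4.range ≃ {g : G // ∃ y : G, y ^ 4 = g} :=
      Equiv.subtypeEquivRight fun g => by
        simp [hpw4def, MonoidHom.mem_range, powMonoidHom_apply]
    have e2 : {g : G // ∃ y : G, y ^ 4 = g} ≃
        {h : ∀ i, Multiplicative (ZMod (n i)) // ∃ y, y ^ 4 = h} :=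
      Equiv.subtypeEquiv φ.toEquiv fun g => by
        show (∃ y : G, y ^ 4 = g) ↔ (∃ y, y ^ 4 = φ g)
        exact ⟨fun ⟨y, hy⟩ => ⟨φ y, by rw [← map_pow, hy]⟩,
         fun ⟨y, hy⟩ => ⟨φ.symm y, φ.injective (by rw [map_pow, MulEquiv.apply_symm_apply, hy])⟩⟩
    have e3 : {h : ∀ i, Multiplicative (ZMod (n i)) // ∃ y, y ^ 4 = h} ≃
        ∀ i, {x : Multiplicative (ZMod (n i)) // ∃ y, y ^ 4 = x} := by
      refine (Equiv.subtypeEquivRight fun h => ?_).trans Equiv.subtypePiEquivPi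
      constructor
      · rintro ⟨y, rfl⟩ i
        exact ⟨y i, rfl⟩
      · intro hh
        exact ⟨fun i => (hh i).choose, funext fun i => (hh i).choose_spec⟩
    rw [Nat.card_congr ((e1.trans e2).trans e3), Nat.card_pi]
    exact Finset.prod_congr rfl fun i _ => cnt_range' (n i) 4
  have hDcard : Nat.card {g : G // g ^ 2 = 1 ∧ ∃ y : G, y ^ 4 = g} =
      ∏ i, Nat.card {x : Multiplicative (ZMod (n i)) // x ^ 2 = 1 ∧ ∃ y, y ^ 4 = x} := by
    have e2 : {g : G // g ^ 2 = 1 ∧ ∃ y : G, y ^ 4 = g} ≃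
        {h : ∀ i, Multiplicative (ZMod (n i)) // h ^ 2 = 1 ∧ ∃ y, y ^ 4 = h} :=
      Equiv.subtypeEquiv φ.toEquiv fun g => by
        show g ^ 2 = 1 ∧ (∃ y : G, y ^ 4 = g) ↔ φ g ^ 2 = 1 ∧ (∃ y, y ^ 4 = φ g)
        constructor
        · rintro ⟨h1, y, hy⟩
          exact ⟨by rw [← map_pow, h1, map_one], ⟨φ y, by rw [← map_pow, hy]⟩⟩
        · rintro ⟨h1, y, hy⟩
          exact ⟨φ.injective (by rw [map_pow, h1, map_one]),
            ⟨φ.symm y, φ.injective (by rw [map_pow, MulEquiv.apply_symm_apply, hy])⟩⟩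
    have e3 : {h : ∀ i, Multiplicative (ZMod (n i)) // h ^ 2 = 1 ∧ ∃ y, y ^ 4 = h} ≃
        ∀ i, {x : Multiplicative (ZMod (n i)) // x ^ 2 = 1 ∧ ∃ y, y ^ 4 = x} := by
      refine (Equiv.subtypeEquivRight fun h => ?_).trans Equiv.subtypePiEquivPi
      constructor
      · rintro ⟨h1, y, rfl⟩ i
        exact ⟨congrFun h1 i, ⟨y i, rfl⟩⟩
      · intro hh
        refine ⟨funext fun i => (hh i).1, ⟨fun i => (hh i).2.choose,
          funext fun i => (hh i).2.choose_spec⟩⟩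
    rw [Nat.card_congr (e2.trans e3), Nat.card_pi]
  -- per-factor counts for the D-invariant
  set D1 : ι → ℕ := fun i =>
    Nat.card {x : Multiplicative (ZMod (n i)) // x ^ 2 = 1 ∧ ∃ y, y ^ 4 = x} with hD1def
  have hD1pos : ∀ i, 1 ≤ D1 i := by
    intro i
    have : Nonempty {x : Multiplicative (ZMod (n i)) // x ^ 2 = 1 ∧ ∃ y, y ^ 4 = x} :=
      ⟨⟨1, one_pow 2, ⟨1, one_pow 4⟩⟩⟩
    exact Nat.card_pos
  have hD1two : ∀ i, 3 ≤ e i → 2 ≤ D1 i := by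
    intro i h3
    set m := e i with hm
    have hnat : 2 * 2 ^ (m - 1) = 2 ^ m := by
      have hmm : m - 1 + 1 = m := by omega
      have hp := pow_succ 2 (m - 1)
      rw [hmm] at hp
      rw [hp, mul_comm]
    have hnat4 : 4 * 2 ^ (m - 3) = 2 ^ (m - 1) := by
      rw [show (4 : ℕ) = 2 ^ 2 by norm_num, ← pow_add]
      congr 1
      omega
    have hcast0 : ((2 ^ m : ℕ) : ZMod (n i)) = 0 := by
      rw [← hne i]
      exact ZMod.natCast_self (n i)
    have hx0ne : ((2 ^ (m - 1) : ℕ) : ZMod (n i)) ≠ 0 := by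
      rw [Ne, ZMod.natCast_eq_zero_iff, hne i]
      intro hdd
      have := (Nat.pow_dvd_pow_iff_le_right (by norm_num : (1:ℕ) < 2)).mp hdd
      omega
    have hx0sq : (Multiplicative.ofAdd (((2 ^ (m - 1) : ℕ)) : ZMod (n i))) ^ 2 = 1 := by
      rw [← ofAdd_nsmul]
      have h2 : (2 : ℕ) • (((2 ^ (m - 1) : ℕ)) : ZMod (n i)) = 0 := by
        have hc : (2 : ℕ) • (((2 ^ (m - 1) : ℕ)) : ZMod (n i)) =
            ((2 * 2 ^ (m - 1) : ℕ) : ZMod (n i)) := by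
          push_cast
          ring
        rw [hc, hnat, hcast0]
      rw [h2, ofAdd_zero]
    have hx0r : ∃ y, y ^ 4 = Multiplicative.ofAdd (((2 ^ (m - 1) : ℕ)) : ZMod (n i)) := by
      refine ⟨Multiplicative.ofAdd (((2 ^ (m - 3) : ℕ)) : ZMod (n i)), ?_⟩
      rw [← ofAdd_nsmul]
      congr 1
      have hc : (4 : ℕ) • (((2 ^ (m - 3) : ℕ)) : ZMod (n i)) =
          ((4 * 2 ^ (m - 3) : ℕ) : ZMod (n i)) := by
        push_cast
        ring
      rw [hc, hnat4]
    have hnt : Nontrivial {x : Multiplicative (ZMod (n i)) // x ^ 2 = 1 ∧ ∃ y, y ^ 4 = x} := by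
      refine ⟨⟨Multiplicative.ofAdd (((2 ^ (m - 1) : ℕ)) : ZMod (n i)), hx0sq, hx0r⟩,
        ⟨1, one_pow 2, ⟨1, one_pow 4⟩⟩, ?_⟩
      intro hcontra
      apply hx0ne
      have := congrArg Subtype.val hcontra
      exact Multiplicative.ofAdd.injective this
    exact Finite.one_lt_card_iff_nontrivial.mpr hnt
  -- at most one index with exponent ≥ 3
  have hbig : ∀ i j, i ≠ j → 3 ≤ e i → 3 ≤ e j → False := by
    intro i j hij h3i h3j
    have h4 : 4 ≤ ∏ k, D1 k := by
      have hpair : D1 i * D1 j = ∏ k ∈ ({i, j} : Finset ι), D1 k :=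
        (Finset.prod_pair hij).symm
      have hle : ∏ k ∈ ({i, j} : Finset ι), D1 k ≤ ∏ k, D1 k :=
        Finset.prod_le_prod_of_subset_of_one_le' (Finset.subset_univ _)
          (fun k _ _ => hD1pos k)
      calc (4 : ℕ) = 2 * 2 := rfl
        _ ≤ D1 i * D1 j := Nat.mul_le_mul (hD1two i h3i) (hD1two j h3j)
        _ ≤ ∏ k, D1 k := hpair ▸ hle
    rw [← hDcard] at h4
    omega
  -- value of the per-factor B-invariant
  have hB1 : ∀ i, 2 ≤ e i → n i / Nat.gcd (n i) 4 = 2 ^ (e i - 2) := by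
    intro i h2
    have h4d : (4 : ℕ) ∣ n i := by
      rw [hne i, show (4 : ℕ) = 2 ^ 2 by norm_num]
      exact pow_dvd_pow 2 h2
    rw [Nat.gcd_eq_right h4d, hne i, show (4 : ℕ) = 2 ^ 2 by norm_num,
      Nat.pow_div h2 (by norm_num)]
  have hle4 : ∀ i, 3 ≤ e i → e i ≤ 4 := by
    intro i h3
    have hdvdB : 2 ^ (e i - 2) ∣ Nat.card pw4.range := by
      rw [hBcard, ← hB1 i (by omega)]
      exact Finset.dvd_prod_of_mem _ (Finset.mem_univ i)
    have hh := hdvdB.trans hbdvd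
    rw [show (4 : ℕ) = 2 ^ 2 by norm_num] at hh
    have := (Nat.pow_dvd_pow_iff_le_right (by norm_num : (1:ℕ) < 2)).mp hh
    omega
  have h44 : ∀ i, e i = 4 → Nat.card sq.ker = 8 := by
    intro i h4
    have hBi : n i / Nat.gcd (n i) 4 = 4 := by
      rw [hB1 i (by omega), h4]
      norm_num
    have h4B : (4 : ℕ) ∣ Nat.card pw4.range := by
      have hd : n i / Nat.gcd (n i) 4 ∣ ∏ k, n k / Nat.gcd (n k) 4 :=
        Finset.dvd_prod_of_mem (fun k => n k / Nat.gcd (n k) 4) (Finset.mem_univ i)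
      rw [hBi] at hd
      rw [hBcard]
      exact hd
    have hBeq : Nat.card pw4.range = 4 := Nat.dvd_antisymm hbdvd h4B
    have hec := hb4 hBeq
    rw [hec] at hT
    omega
  -- r = 3 or r = 4
  have hecpos : 0 < Nat.card (C ⊓ sq.range : Subgroup G) := Nat.card_pos
  have hecle : Nat.card (C ⊓ sq.range : Subgroup G) ≤ 4 :=
    Nat.le_of_dvd (by norm_num) hec4
  have hec24 : Nat.card (C ⊓ sq.range : Subgroup G) = 2 ∨
      Nat.card (C ⊓ sq.range : Subgroup G) = 4 := by omega
  rw [hAcard] at hT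
  have hr34 : r = 3 ∨ r = 4 := by
    have hpow : (2 : ℕ) ^ r = 8 ∨ (2 : ℕ) ^ r = 16 := by
      rcases hec24 with h | h <;> rw [h] at hT <;> omega
    rcases hpow with h | h
    · exact Or.inl (Nat.pow_right_injective (by norm_num)
        (h.trans (by norm_num : (8 : ℕ) = 2 ^ 3)))
    · exact Or.inr (Nat.pow_right_injective (by norm_num)
        (h.trans (by norm_num : (16 : ℕ) = 2 ^ 4)))
  have h44r : ∀ i, e i = 4 → r = 3 := by
    intro i h4
    have h8 := h44 i h4
    rw [hAcard] at h8
    exact Nat.pow_right_injective (by norm_num) (h8.trans (by norm_num : (8 : ℕ) = 2 ^ 3))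
  clear hT hec24 hecpos hecle hec2 hec4 hb4 hbdvd hd2 hDcard hD1pos hD1two hBcard hB1 h44
  rcases hr34 with hr3 | hr4
  · -- r = 3 : G ≅ ℤ/16 × ℤ/4 × ℤ/4
    have hex : ∃ i0, 3 ≤ e i0 := by
      by_contra hno
      push_neg at hno
      have hbound : ∑ i, e i ≤ ∑ _i : ι, 2 :=
        Finset.sum_le_sum fun i _ => by have := hno i; omega
      rw [Finset.sum_const, Finset.card_univ, smul_eq_mul, hsum] at hbound
      have hrr : r = Fintype.card ι := hrdef
      omega
    obtain ⟨i0, hi0⟩ := hex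
    let σ0 : Fin 3 ≃ ι := (Fintype.equivFinOfCardEq hr3).symm
    let σ : Fin 3 ≃ ι := (Equiv.swap 0 (σ0.symm i0)).trans σ0
    have hσ0 : σ 0 = i0 := by
      simp [σ, Equiv.swap_apply_left]
    have hsmall : ∀ j : Fin 3, j ≠ 0 → e (σ j) ≤ 2 := by
      intro j hj
      by_contra hb'
      exact hbig (σ j) i0 (fun h => hj (σ.injective (h.trans hσ0.symm))) (by omega) hi0
    have hsum3 : e (σ 0) + e (σ 1) + e (σ 2) = 8 := by
      have h := Equiv.sum_comp σ e
      rw [Fin.sum_univ_three] at h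
      rw [h, hsum]
    have h0 : 3 ≤ e (σ 0) := by rw [hσ0]; exact hi0
    have h0' : e (σ 0) ≤ 4 := by rw [hσ0]; exact hle4 i0 hi0
    have h1 := hsmall 1 (by decide)
    have h2 := hsmall 2 (by decide)
    have h1' := he1 (σ 1)
    have h2' := he1 (σ 2)
    have hv0 : e (σ 0) = 4 := by omega
    have hv1 : e (σ 1) = 2 := by omega
    have hv2 : e (σ 2) = 2 := by omega
    have hcomp : ∀ j : Fin 3, n (σ.symm.symm j) = ![(16 : ℕ), 4, 4] j := by
      intro j
      fin_cases j
      · show n (σ 0) = 16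
        rw [hne, hv0]; norm_num
      · show n (σ 1) = 4
        rw [hne, hv1]; norm_num
      · show n (σ 2) = 4
        rw [hne, hv2]; norm_num
    refine Or.inr (Or.inl ⟨?_⟩)
    refine φ.trans ?_
    refine (MulEquiv.piCongrLeft'' (fun i => Multiplicative (ZMod (n i))) σ.symm).trans ?_
    exact (MulEquiv.piCongrRight (fun j => zmodMulCongr (hcomp j))).trans
      ((MulEquiv.piFin3' _).trans (prod3Untag 16 4 4))
  · -- r = 4
    by_cases hex : ∃ i0, 3 ≤ e i0
    · -- G ≅ ℤ/8 × ℤ/4 × ℤ/4 × ℤ/2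
      obtain ⟨i0, hi0⟩ := hex
      have hei0 : e i0 = 3 := by
        have h4' := hle4 i0 hi0
        rcases (by omega : e i0 = 3 ∨ e i0 = 4) with h | h
        · exact h
        · have := h44r i0 h
          omega
      let σ0 : Fin 4 ≃ ι := (Fintype.equivFinOfCardEq hr4).symm
      let σ1 : Fin 4 ≃ ι := (Equiv.swap 0 (σ0.symm i0)).trans σ0
      have hσ10 : σ1 0 = i0 := by
        simp [σ1, Equiv.swap_apply_left]
      have hsmall : ∀ j : Fin 4, j ≠ 0 → e (σ1 j) ≤ 2 := by
        intro j hj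
        by_contra hb'
        exact hbig (σ1 j) i0 (fun h => hj (σ1.injective (h.trans hσ10.symm))) (by omega) hi0
      have hsum4 : e (σ1 0) + e (σ1 1) + e (σ1 2) + e (σ1 3) = 8 := by
        have h := Equiv.sum_comp σ1 e
        rw [Fin.sum_univ_four] at h
        rw [h, hsum]
      have hv0 : e (σ1 0) = 3 := by rw [hσ10]; exact hei0
      have h1 := hsmall 1 (by decide)
      have h2 := hsmall 2 (by decide)
      have h3 := hsmall 3 (by decide)
      have h1' := he1 (σ1 1)
      have h2' := he1 (σ1 2)
      have h3' := he1 (σ1 3)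
      have hcase : ∃ j0 : Fin 4, j0 ≠ 0 ∧ e (σ1 j0) = 1 := by
        rcases (by omega : e (σ1 1) = 1 ∨ e (σ1 2) = 1 ∨ e (σ1 3) = 1) with h | h | h
        · exact ⟨1, by decide, h⟩
        · exact ⟨2, by decide, h⟩
        · exact ⟨3, by decide, h⟩
      obtain ⟨j0, hj00, hj01⟩ := hcase
      let σ : Fin 4 ≃ ι := (Equiv.swap j0 3).trans σ1
      have hw0 : (Equiv.swap j0 3) 0 = 0 :=
        Equiv.swap_apply_of_ne_of_ne (Ne.symm hj00) (by decide)
      have hσ0 : σ 0 = i0 := by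
        show σ1 ((Equiv.swap j0 3) 0) = i0
        rw [hw0, hσ10]
      have hσ3 : e (σ 3) = 1 := by
        show e (σ1 ((Equiv.swap j0 3) 3)) = 1
        rw [Equiv.swap_apply_right]
        exact hj01
      have hu0 : e (σ 0) = 3 := by rw [hσ0]; exact hei0
      have hmid : ∀ j : Fin 4, j ≠ 0 → e (σ j) ≤ 2 := by
        intro j hj
        apply hsmall
        intro hzero
        apply hj
        have := (Equiv.swap j0 3).injective (hzero.trans hw0.symm)
        exact this
      have hm1 := hmid 1 (by decide)
      have hm2 := hmid 2 (by decide)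
      have hm1' := he1 (σ 1)
      have hm2' := he1 (σ 2)
      have hsum4' : e (σ 0) + e (σ 1) + e (σ 2) + e (σ 3) = 8 := by
        have h := Equiv.sum_comp σ e
        rw [Fin.sum_univ_four] at h
        rw [h, hsum]
      have hu1 : e (σ 1) = 2 := by omega
      have hu2 : e (σ 2) = 2 := by omega
      have hcomp : ∀ j : Fin 4, n (σ.symm.symm j) = ![(8 : ℕ), 4, 4, 2] j := by
        intro j
        fin_cases j
        · show n (σ 0) = 8
          rw [hne, hu0]; norm_num
        · show n (σ 1) = 4
          rw [hne, hu1]; norm_num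
        · show n (σ 2) = 4
          rw [hne, hu2]; norm_num
        · show n (σ 3) = 2
          rw [hne, hσ3]; norm_num
      refine Or.inr (Or.inr ⟨?_⟩)
      refine φ.trans ?_
      refine (MulEquiv.piCongrLeft'' (fun i => Multiplicative (ZMod (n i))) σ.symm).trans ?_
      exact (MulEquiv.piCongrRight (fun j => zmodMulCongr (hcomp j))).trans
        ((MulEquiv.piFin4' _).trans (prod4Untag 8 4 4 2))
    · -- G ≅ (ℤ/4)⁴
      push_neg at hex
      let σ : Fin 4 ≃ ι := (Fintype.equivFinOfCardEq hr4).symm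
      have hsum4 : e (σ 0) + e (σ 1) + e (σ 2) + e (σ 3) = 8 := by
        have h := Equiv.sum_comp σ e
        rw [Fin.sum_univ_four] at h
        rw [h, hsum]
      have b0 := hex (σ 0); have b1 := hex (σ 1)
      have b2 := hex (σ 2); have b3 := hex (σ 3)
      have c0 := he1 (σ 0); have c1 := he1 (σ 1)
      have c2 := he1 (σ 2); have c3 := he1 (σ 3)
      have hall0 : e (σ 0) = 2 := by omega
      have hall1 : e (σ 1) = 2 := by omega
      have hall2 : e (σ 2) = 2 := by omega
      have hall3 : e (σ 3) = 2 := by omega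
      have hcomp : ∀ j : Fin 4, n (σ.symm.symm j) = ![(4 : ℕ), 4, 4, 4] j := by
        intro j
        fin_cases j
        · show n (σ 0) = 4
          rw [hne, hall0]; norm_num
        · show n (σ 1) = 4
          rw [hne, hall1]; norm_num
        · show n (σ 2) = 4
          rw [hne, hall2]; norm_num
        · show n (σ 3) = 4
          rw [hne, hall3]; norm_num
      refine Or.inl ⟨?_⟩
      refine φ.trans ?_
      refine (MulEquiv.piCongrLeft'' (fun i => Multiplicative (ZMod (n i))) σ.symm).trans ?_
      exact (MulEquiv.piCongrRight (fun j => zmodMulCongr (hcomp j))).trans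
        ((MulEquiv.piFin4' _).trans (prod4Untag 4 4 4 4))
end
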